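/- arXiv:1409.5295 — 4 statements merged into one kernel-verified Lean document; each statement's English description precedes it below -/
import Mathlib

section
/- If H is a 4-Ore graph and v is any vertex of H, then H − v contains a triangle. -/
open SimpleGraph

/-- A graph is 4-critical if it is not 3-colorable but every proper subgraph is 3-colorable. -/
def FourCritical {V : Type*} (G : SimpleGraph V) : Prop :=
  ¬ G.Colorable 3 ∧ ∀ H : SimpleGraph V, H < G → H.Colorable 3

/-- `S` is the vertex set of a cycle of length at most four in `G`. -/
def ShortCycleSet {V : Type*} (G : SimpleGraph V) (S : Set V) : Prop :=
  ∃ (v : V) (w : G.Walk v v), w.IsCycle ∧ w.length ≤ 4 ∧ {x | x ∈ w.support} = S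

/-- `maxTri G` (the quantity `T(G)` of the paper) is the maximum number of pairwise
vertex-disjoint cycles of length at most four in `G`. -/
noncomputable def maxTri {V : Type*} (G : SimpleGraph V) : ℕ :=
  sSup {n | ∃ C : Finset (Set V), C.card = n ∧ (∀ S ∈ C, ShortCycleSet G S) ∧
    (C : Set (Set V)).Pairwise Disjoint}

/-- The potential `p(G) = 5|V(G)| - 3|E(G)| - T(G)`. -/
noncomputable def pot {V : Type*} (G : SimpleGraph V) : ℤ :=
  5 * (Nat.card V : ℤ) - 3 * (Nat.card G.edgeSet : ℤ) - (maxTri G : ℤ)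

/-- The graph obtained by the Ore composition of `G₁` (edge side, replaced edge `xy`) and
`G₂` (split side, split vertex `z`, with `A` the set of neighbours of `z` assigned to the
copy `z₁` identified with `x`). -/
def oreGraph {V₁ V₂ : Type*} (G₁ : SimpleGraph V₁) (x y : V₁) (G₂ : SimpleGraph V₂)
    (z : V₂) (A : Set V₂) : SimpleGraph (V₁ ⊕ {v : V₂ // v ≠ z}) :=
  SimpleGraph.fromRel (fun a b =>
    match a, b with
    | Sum.inl a, Sum.inl b => G₁.Adj a b ∧ ¬(a = x ∧ b = y) ∧ ¬(a = y ∧ b = x)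
    | Sum.inr a, Sum.inr b => G₂.Adj a.1 b.1
    | Sum.inl a, Sum.inr b => G₂.Adj z b.1 ∧ ((a = x ∧ b.1 ∈ A) ∨ (a = y ∧ b.1 ∉ A))
    | Sum.inr _, Sum.inl _ => False)

/-- `H` is an Ore composition of `G₁` and `G₂`: an edge `xy` of `G₁` is deleted, a vertex `z`
of `G₂` is split into two vertices of positive degree, which are identified with `x` and `y`. -/
def IsOreComposition {V₁ V₂ V₃ : Type*} (H : SimpleGraph V₃) (G₁ : SimpleGraph V₁)
    (G₂ : SimpleGraph V₂) : Prop :=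
  ∃ (x y : V₁) (z : V₂) (A : Set V₂), G₁.Adj x y ∧
    (A ∩ G₂.neighborSet z).Nonempty ∧ ((G₂.neighborSet z) \ A).Nonempty ∧
    Nonempty (H ≃g oreGraph G₁ x y G₂ z A)

/-- The 4-Ore graphs on vertex sets `Fin n`: obtained from copies of `K₄` by
repeated Ore compositions. -/
inductive FourOreAux : ∀ {n : ℕ}, SimpleGraph (Fin n) → Prop
  | k4 : FourOreAux (⊤ : SimpleGraph (Fin 4))
  | ore {n₁ n₂ n : ℕ} {G₁ : SimpleGraph (Fin n₁)} {G₂ : SimpleGraph (Fin n₂)}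
      {G : SimpleGraph (Fin n)} :
      FourOreAux G₁ → FourOreAux G₂ → IsOreComposition G G₁ G₂ → FourOreAux G

/-- A graph is 4-Ore if it is isomorphic to a 4-Ore graph on some `Fin n`. -/
def IsFourOre {V : Type*} (H : SimpleGraph V) : Prop :=
  ∃ (n : ℕ) (G : SimpleGraph (Fin n)), FourOreAux G ∧ Nonempty (H ≃g G)

/-- `G` contains `K₄` minus an edge as a subgraph (vertices `a,b` of degree three in it). -/
def HasK4MinusE {V : Type*} (G : SimpleGraph V) : Prop :=
  ∃ a b c d : V, a ≠ b ∧ a ≠ c ∧ a ≠ d ∧ b ≠ c ∧ b ≠ d ∧ c ≠ d ∧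
    G.Adj a b ∧ G.Adj a c ∧ G.Adj a d ∧ G.Adj b c ∧ G.Adj b d

/-- `a,b,c,d` form a diamond of `H`: a subgraph isomorphic to `K₄ - e` (with `a,b` its
degree-three vertices) such that `a` and `b` also have degree three in `H`. -/
def IsDiamond {V : Type*} (H : SimpleGraph V) (a b c d : V) : Prop :=
  a ≠ b ∧ a ≠ c ∧ a ≠ d ∧ b ≠ c ∧ b ≠ d ∧ c ≠ d ∧
  H.Adj a b ∧ H.Adj a c ∧ H.Adj a d ∧ H.Adj b c ∧ H.Adj b d ∧
  (H.neighborSet a).ncard = 3 ∧ (H.neighborSet b).ncard = 3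

/-- Splitting the vertex `v` of `G` into two vertices `Sum.inr 0` and `Sum.inr 1`, the
neighbours of `v` in `A` going to the first and the remaining neighbours to the second. -/
def splitGraph {V : Type*} (G : SimpleGraph V) (v : V) (A : Set V) :
    SimpleGraph ({u : V // u ≠ v} ⊕ Fin 2) :=
  SimpleGraph.fromRel (fun a b =>
    match a, b with
    | Sum.inl a, Sum.inl b => G.Adj a.1 b.1
    | Sum.inl a, Sum.inr i => G.Adj v a.1 ∧ ((i = 0 ∧ a.1 ∈ A) ∨ (i = 1 ∧ a.1 ∉ A))
    | _, _ => False)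

/-- The graph `T₈` of the paper. -/
def T8 : SimpleGraph (Fin 8) :=
  SimpleGraph.fromRel (fun a b => (a, b) ∈
    ([(0,1),(1,2),(2,0),(0,3),(3,6),(6,7),(7,3),(2,4),(4,6),(6,5),(5,1),(4,7),(7,5)] :
      List (Fin 8 × Fin 8)))

/-- The graph `T₁₁` of the paper. -/
def T11 : SimpleGraph (Fin 11) :=
  SimpleGraph.fromRel (fun a b => (a, b) ∈
    ([(0,8),(8,10),(10,9),(9,1),(8,9),(10,1),(1,2),(2,0),(0,3),(3,6),(6,7),(7,3),
      (2,4),(4,6),(6,5),(5,1),(4,7),(7,5)] : List (Fin 11 × Fin 11)))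

/-- The wheel `W₅`: a 5-cycle `0,…,4` together with a hub `5` adjacent to all of it. -/
def W5 : SimpleGraph (Fin 6) :=
  SimpleGraph.fromRel (fun a b => (a, b) ∈
    ([(0,1),(1,2),(2,3),(3,4),(4,0),(5,0),(5,1),(5,2),(5,3),(5,4)] : List (Fin 6 × Fin 6)))

/-- The exceptional 4-critical graphs: `K₄`, `H₇` (the 4-Ore graph on seven vertices),
`W₅`, `T₈`, `T₁₁`, and the 4-Ore graphs with `T = 3`. -/
def Exceptional {V : Type*} (G : SimpleGraph V) : Prop :=
  Nonempty (G ≃g (⊤ : SimpleGraph (Fin 4))) ∨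
  (∃ H₇ : SimpleGraph (Fin 7), IsFourOre H₇ ∧ Nonempty (G ≃g H₇)) ∨
  Nonempty (G ≃g W5) ∨ Nonempty (G ≃g T8) ∨ Nonempty (G ≃g T11) ∨
  (IsFourOre G ∧ maxTri G = 3)

/-- `G` is a minimum counterexample to the main theorem: a 4-critical graph with
`p(G) ≥ -1` which is not exceptional, such that every 4-critical graph on fewer vertices
satisfies the conclusion of the main theorem. -/
def MinCounterexample {V : Type*} (G : SimpleGraph V) : Prop :=
  FourCritical G ∧ -1 ≤ pot G ∧ ¬ Exceptional G ∧
  ∀ m : ℕ, m < Nat.card V → ∀ H : SimpleGraph (Fin m), FourCritical H →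
    Exceptional H ∨ pot H ≤ -2

/-- The φ-identification `G_φ(R)`: the color classes of `R` are identified to the three
vertices `Sum.inr i`, which form a triangle. -/
def identGraph {V : Type*} (G : SimpleGraph V) (R : Set V) (φ : V → Fin 3) :
    SimpleGraph ({v : V // v ∉ R} ⊕ Fin 3) :=
  SimpleGraph.fromRel (fun a b =>
    match a, b with
    | Sum.inl a, Sum.inl b => G.Adj a.1 b.1
    | Sum.inl a, Sum.inr i => ∃ r ∈ R, φ r = i ∧ G.Adj a.1 r
    | Sum.inr _, Sum.inr _ => True
    | Sum.inr _, Sum.inl _ => False)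

lemma fourOreAux_triangle : ∀ {n : ℕ} (G : SimpleGraph (Fin n)), FourOreAux G →
    ∀ v : Fin n, ∃ a b c : Fin n, a ≠ v ∧ b ≠ v ∧ c ≠ v ∧ G.Adj a b ∧ G.Adj a c ∧ G.Adj b c := by
  intro n G hG
  induction hG with
  | k4 => decide
  | @ore n₁ n₂ n G₁ G₂ G h₁ h₂ hcomp ih₁ ih₂ =>
    obtain ⟨x, y, z, A, hxy, -, -, ⟨e⟩⟩ := hcomp
    intro v
    -- helper: pull back a triangle through e.symm
    have pull : ∀ a b c : Fin n₁ ⊕ {u : Fin n₂ // u ≠ z},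
        a ≠ e v → b ≠ e v → c ≠ e v →
        (oreGraph G₁ x y G₂ z A).Adj a b → (oreGraph G₁ x y G₂ z A).Adj a c →
        (oreGraph G₁ x y G₂ z A).Adj b c →
        ∃ a' b' c' : Fin n, a' ≠ v ∧ b' ≠ v ∧ c' ≠ v ∧ G.Adj a' b' ∧ G.Adj a' c' ∧
          G.Adj b' c' := by
      intro a b c ha hb hc hab hac hbc
      refine ⟨e.symm a, e.symm b, e.symm c, ?_, ?_, ?_, ?_, ?_, ?_⟩
      · intro h; exact ha (by simpa using congrArg e h)
      · intro h; exact hb (by simpa using congrArg e h)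
      · intro h; exact hc (by simpa using congrArg e h)
      · exact e.symm.map_adj_iff.mpr hab
      · exact e.symm.map_adj_iff.mpr hac
      · exact e.symm.map_adj_iff.mpr hbc
    rcases hw : e v with a | b
    · -- use triangle in G₂ - z
      obtain ⟨a', b', c', ha', hb', hc', hab, hac, hbc⟩ := ih₂ z
      refine pull (Sum.inr ⟨a', ha'⟩) (Sum.inr ⟨b', hb'⟩) (Sum.inr ⟨c', hc'⟩)
        (by rw [hw]; simp) (by rw [hw]; simp) (by rw [hw]; simp) ?_ ?_ ?_
      · exact ⟨by simp [Subtype.ext_iff, hab.ne], Or.inl hab⟩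
      · exact ⟨by simp [Subtype.ext_iff, hac.ne], Or.inl hac⟩
      · exact ⟨by simp [Subtype.ext_iff, hbc.ne], Or.inl hbc⟩
    · -- use triangle in G₁ - x
      obtain ⟨a', b', c', ha', hb', hc', hab, hac, hbc⟩ := ih₁ x
      refine pull (Sum.inl a') (Sum.inl b') (Sum.inl c')
        (by rw [hw]; simp) (by rw [hw]; simp) (by rw [hw]; simp) ?_ ?_ ?_
      · exact ⟨by simp [hab.ne], Or.inl ⟨hab, fun h => ha' h.1, fun h => hb' h.2⟩⟩
      · exact ⟨by simp [hac.ne], Or.inl ⟨hac, fun h => ha' h.1, fun h => hc' h.2⟩⟩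
      · exact ⟨by simp [hbc.ne], Or.inl ⟨hbc, fun h => hb' h.1, fun h => hc' h.2⟩⟩

/-- If `H` is 4-Ore and `v ∈ V(H)`, then there is a triangle in `H - v`. -/
theorem fourOre_vertex_and_triangle {V : Type*} (H : SimpleGraph V) (hH : IsFourOre H)
    (v : V) :
    ∃ a b c : V, a ≠ v ∧ b ≠ v ∧ c ≠ v ∧ H.Adj a b ∧ H.Adj a c ∧ H.Adj b c := by
  obtain ⟨n, G, hG, ⟨e⟩⟩ := hH
  obtain ⟨a, b, c, ha, hb, hc, hab, hac, hbc⟩ := fourOreAux_triangle G hG (e v)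
  refine ⟨e.symm a, e.symm b, e.symm c, ?_, ?_, ?_,
    e.symm.map_adj_iff.mpr hab, e.symm.map_adj_iff.mpr hac, e.symm.map_adj_iff.mpr hbc⟩
  · intro h; exact ha (by simpa using congrArg e h)
  · intro h; exact hb (by simpa using congrArg e h)
  · intro h; exact hc (by simpa using congrArg e h)
end

section
/- If H is a 4-Ore graph with H ≠ K4 and T is a triangle in H, then H − V(T) contains a triangle. -/
open SimpleGraph

section OreAux

variable {V₁ V₂ : Type*} {G₁ : SimpleGraph V₁} {x y : V₁} {G₂ : SimpleGraph V₂}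
  {z : V₂} {A : Set V₂}

lemma ore_adj_inl {a b : V₁} (hab : G₁.Adj a b) (h1 : ¬(a = x ∧ b = y))
    (h2 : ¬(a = y ∧ b = x)) :
    (oreGraph G₁ x y G₂ z A).Adj (Sum.inl a) (Sum.inl b) := by
  rw [oreGraph, SimpleGraph.fromRel_adj]
  exact ⟨by simp [hab.ne], Or.inl ⟨hab, h1, h2⟩⟩

lemma ore_adj_inr {a b : V₂} (hab : G₂.Adj a b) (ha : a ≠ z) (hb : b ≠ z) :
    (oreGraph G₁ x y G₂ z A).Adj (Sum.inr ⟨a, ha⟩) (Sum.inr ⟨b, hb⟩) := by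
  rw [oreGraph, SimpleGraph.fromRel_adj]
  exact ⟨by simp [hab.ne], Or.inl hab⟩

lemma ore_adj_cross {a : V₁} {b : {v : V₂ // v ≠ z}}
    (h : (oreGraph G₁ x y G₂ z A).Adj (Sum.inl a) (Sum.inr b)) : a = x ∨ a = y := by
  rw [oreGraph, SimpleGraph.fromRel_adj] at h
  rcases h with ⟨-, ⟨-, ⟨h, -⟩ | ⟨h, -⟩⟩ | h⟩
  · exact Or.inl h
  · exact Or.inr h
  · exact h.elim

lemma ore_not_adj_xy : ¬ (oreGraph G₁ x y G₂ z A).Adj (Sum.inl x) (Sum.inl y) := by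
  rw [oreGraph, SimpleGraph.fromRel_adj]
  rintro ⟨-, ⟨-, h, -⟩ | ⟨-, -, h⟩⟩
  · exact h ⟨rfl, rfl⟩
  · exact h ⟨rfl, rfl⟩

lemma ore_two_inl {a b : V₁} (ha : a = x ∨ a = y) (hb : b = x ∨ b = y)
    (h : (oreGraph G₁ x y G₂ z A).Adj (Sum.inl a) (Sum.inl b)) : False := by
  rcases ha with rfl | rfl <;> rcases hb with rfl | rfl
  · exact h.ne rfl
  · exact ore_not_adj_xy h
  · exact ore_not_adj_xy h.symm
  · exact h.ne rfl

lemma ore_triL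
    (tri₁ : ∀ s : V₁, ∃ a b c : V₁, a ≠ s ∧ b ≠ s ∧ c ≠ s ∧
      G₁.Adj a b ∧ G₁.Adj a c ∧ G₁.Adj b c)
    (s : V₁) (hs : s = x ∨ s = y) :
    ∃ a b c : V₁, a ≠ s ∧ b ≠ s ∧ c ≠ s ∧
      (oreGraph G₁ x y G₂ z A).Adj (Sum.inl a) (Sum.inl b) ∧
      (oreGraph G₁ x y G₂ z A).Adj (Sum.inl a) (Sum.inl c) ∧
      (oreGraph G₁ x y G₂ z A).Adj (Sum.inl b) (Sum.inl c) := by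
  obtain ⟨a, b, c, ha, hb, hc, hab, hac, hbc⟩ := tri₁ s
  have key : ∀ u v : V₁, u ≠ s → v ≠ s → G₁.Adj u v →
      (oreGraph G₁ x y G₂ z A).Adj (Sum.inl u) (Sum.inl v) := by
    intro u v hu hv huv
    refine ore_adj_inl huv ?_ ?_
    · rintro ⟨rfl, rfl⟩
      rcases hs with rfl | rfl
      · exact hu rfl
      · exact hv rfl
    · rintro ⟨rfl, rfl⟩
      rcases hs with rfl | rfl
      · exact hv rfl
      · exact hu rfl
  exact ⟨a, b, c, ha, hb, hc, key _ _ ha hb hab, key _ _ ha hc hac, key _ _ hb hc hbc⟩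

lemma ore_triR
    (tri₂ : ∃ a b c : V₂, a ≠ z ∧ b ≠ z ∧ c ≠ z ∧
      G₂.Adj a b ∧ G₂.Adj a c ∧ G₂.Adj b c) :
    ∃ a b c : {v : V₂ // v ≠ z},
      (oreGraph G₁ x y G₂ z A).Adj (Sum.inr a) (Sum.inr b) ∧
      (oreGraph G₁ x y G₂ z A).Adj (Sum.inr a) (Sum.inr c) ∧
      (oreGraph G₁ x y G₂ z A).Adj (Sum.inr b) (Sum.inr c) := by
  obtain ⟨a, b, c, ha, hb, hc, hab, hac, hbc⟩ := tri₂
  exact ⟨⟨a, ha⟩, ⟨b, hb⟩, ⟨c, hc⟩, ore_adj_inr hab ha hb, ore_adj_inr hac ha hc,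
    ore_adj_inr hbc hb hc⟩

lemma ore_triangle_avoid
    (tri₁ : ∀ s : V₁, ∃ a b c : V₁, a ≠ s ∧ b ≠ s ∧ c ≠ s ∧
      G₁.Adj a b ∧ G₁.Adj a c ∧ G₁.Adj b c)
    (tri₂ : ∃ a b c : V₂, a ≠ z ∧ b ≠ z ∧ c ≠ z ∧
      G₂.Adj a b ∧ G₂.Adj a c ∧ G₂.Adj b c)
    (p q r : V₁ ⊕ {v : V₂ // v ≠ z})
    (hpq : (oreGraph G₁ x y G₂ z A).Adj p q)
    (hpr : (oreGraph G₁ x y G₂ z A).Adj p r)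
    (hqr : (oreGraph G₁ x y G₂ z A).Adj q r) :
    ∃ a b c : V₁ ⊕ {v : V₂ // v ≠ z},
      a ∉ ({p, q, r} : Set _) ∧ b ∉ ({p, q, r} : Set _) ∧ c ∉ ({p, q, r} : Set _) ∧
      (oreGraph G₁ x y G₂ z A).Adj a b ∧ (oreGraph G₁ x y G₂ z A).Adj a c ∧
      (oreGraph G₁ x y G₂ z A).Adj b c := by
  rcases p with a | a <;> rcases q with b | b <;> rcases r with c | c
  · -- LLL : use a triangle on the G₂ side
    obtain ⟨u, v, w, huv, huw, hvw⟩ := ore_triR (G₁ := G₁) (x := x) (y := y) (A := A) tri₂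
    exact ⟨Sum.inr u, Sum.inr v, Sum.inr w, by simp, by simp, by simp, huv, huw, hvw⟩
  · -- LLR : impossible
    exact absurd hpq (fun h => ore_two_inl (ore_adj_cross hpr) (ore_adj_cross hqr) h)
  · -- LRL : impossible
    exact absurd hpr (fun h => ore_two_inl (ore_adj_cross hpq) (ore_adj_cross hqr.symm) h)
  · -- LRR : one inl, a ∈ {x,y}
    obtain ⟨u, v, w, hu, hv, hw, huv, huw, hvw⟩ := ore_triL (G₂ := G₂) (z := z) (A := A)
      tri₁ a (ore_adj_cross hpq)
    exact ⟨Sum.inl u, Sum.inl v, Sum.inl w, by simp [hu], by simp [hv], by simp [hw],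
      huv, huw, hvw⟩
  · -- RLL : impossible
    exact absurd hqr (fun h => ore_two_inl (ore_adj_cross hpq.symm) (ore_adj_cross hpr.symm) h)
  · -- RLR : one inl (q)
    obtain ⟨u, v, w, hu, hv, hw, huv, huw, hvw⟩ := ore_triL (G₂ := G₂) (z := z) (A := A)
      tri₁ b (ore_adj_cross hqr)
    exact ⟨Sum.inl u, Sum.inl v, Sum.inl w, by simp [hu], by simp [hv], by simp [hw],
      huv, huw, hvw⟩
  · -- RRL : one inl (r)
    obtain ⟨u, v, w, hu, hv, hw, huv, huw, hvw⟩ := ore_triL (G₂ := G₂) (z := z) (A := A)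
      tri₁ c (ore_adj_cross hpr.symm)
    exact ⟨Sum.inl u, Sum.inl v, Sum.inl w, by simp [hu], by simp [hv], by simp [hw],
      huv, huw, hvw⟩
  · -- RRR : use a triangle on the G₁ side avoiding x
    obtain ⟨u, v, w, hu, hv, hw, huv, huw, hvw⟩ := ore_triL (G₂ := G₂) (z := z) (A := A)
      tri₁ x (Or.inl rfl)
    exact ⟨Sum.inl u, Sum.inl v, Sum.inl w, by simp, by simp, by simp, huv, huw, hvw⟩

end OreAux

/-- Every 4-Ore graph contains, for each vertex `v`, a triangle avoiding `v`. -/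
lemma fourOreAux_triangle_avoid : ∀ {n : ℕ} {G : SimpleGraph (Fin n)}, FourOreAux G →
    ∀ v : Fin n, ∃ a b c : Fin n, a ≠ v ∧ b ≠ v ∧ c ≠ v ∧
      G.Adj a b ∧ G.Adj a c ∧ G.Adj b c := by
  intro n G hG
  induction hG with
  | k4 => decide
  | @ore n₁ n₂ m G₁ G₂ G hG₁ hG₂ hcomp ih₁ ih₂ =>
    obtain ⟨x, y, z, A, hxy, hA1, hA2, ⟨f⟩⟩ := hcomp
    intro v
    have hsymm : ∀ w, w ≠ f v → f.symm w ≠ v := by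
      intro w hw h
      exact hw (by rw [← h, f.apply_symm_apply])
    rcases hv : f v with v₁ | v₂
    · obtain ⟨a, b, c, hab, hac, hbc⟩ :=
        ore_triR (G₁ := G₁) (x := x) (y := y) (A := A) (ih₂ z)
      exact ⟨f.symm (Sum.inr a), f.symm (Sum.inr b), f.symm (Sum.inr c),
        hsymm _ (by rw [hv]; simp), hsymm _ (by rw [hv]; simp), hsymm _ (by rw [hv]; simp),
        f.symm.map_adj_iff.mpr hab, f.symm.map_adj_iff.mpr hac, f.symm.map_adj_iff.mpr hbc⟩
    · obtain ⟨a, b, c, ha, hb, hc, hab, hac, hbc⟩ :=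
        ore_triL (G₂ := G₂) (z := z) (A := A) ih₁ x (Or.inl rfl)
      exact ⟨f.symm (Sum.inl a), f.symm (Sum.inl b), f.symm (Sum.inl c),
        hsymm _ (by rw [hv]; simp), hsymm _ (by rw [hv]; simp), hsymm _ (by rw [hv]; simp),
        f.symm.map_adj_iff.mpr hab, f.symm.map_adj_iff.mpr hac, f.symm.map_adj_iff.mpr hbc⟩


/-- If `H ≠ K₄` is 4-Ore and `x,y,z` is a triangle in `H`, then there is a triangle in
`H - {x,y,z}`. -/
theorem fourOre_second_triangle {V : Type*} (H : SimpleGraph V) (hH : IsFourOre H)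
    (hK4 : ¬ Nonempty (H ≃g (⊤ : SimpleGraph (Fin 4))))
    (x y z : V) (hxy : H.Adj x y) (hxz : H.Adj x z) (hyz : H.Adj y z) :
    ∃ a b c : V, a ∉ ({x, y, z} : Set V) ∧ b ∉ ({x, y, z} : Set V) ∧
      c ∉ ({x, y, z} : Set V) ∧ H.Adj a b ∧ H.Adj a c ∧ H.Adj b c := by
  obtain ⟨n, G, hG, ⟨e⟩⟩ := hH
  cases hG with
  | k4 => exact absurd ⟨e⟩ hK4
  | ore hG₁ hG₂ hcomp =>
    obtain ⟨x₀, y₀, z₀, A, hxy₀, hA1, hA2, ⟨f⟩⟩ := hcomp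
    let φ := e.trans f
    obtain ⟨a', b', c', ha', hb', hc', hab, hac, hbc⟩ :=
      ore_triangle_avoid (fourOreAux_triangle_avoid hG₁) (fourOreAux_triangle_avoid hG₂ z₀)
        (φ x) (φ y) (φ z)
        ((Iso.map_adj_iff φ).mpr hxy) ((Iso.map_adj_iff φ).mpr hxz) ((Iso.map_adj_iff φ).mpr hyz)
    have pull : ∀ w, w ∉ ({φ x, φ y, φ z} : Set _) → φ.symm w ∉ ({x, y, z} : Set V) := by
      intro w hw hmem
      apply hw
      have hw' : w = φ (φ.symm w) := (φ.apply_symm_apply w).symm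
      simp only [Set.mem_insert_iff, Set.mem_singleton_iff] at hmem ⊢
      rcases hmem with h | h | h
      · exact Or.inl (by rw [hw', h])
      · exact Or.inr (Or.inl (by rw [hw', h]))
      · exact Or.inr (Or.inr (by rw [hw', h]))
    exact ⟨φ.symm a', φ.symm b', φ.symm c', pull _ ha', pull _ hb', pull _ hc',
      (Iso.map_adj_iff φ.symm).mpr hab, (Iso.map_adj_iff φ.symm).mpr hac, (Iso.map_adj_iff φ.symm).mpr hbc⟩
end

section
/- If H is an Ore-composition of graphs H1 and H2 and at least one of H1, H2 is isomorphic to K4, then T(H) ≥ T(H1) + T(H2) − 1, where T(G) denotes the maximum number of vertex-disjoint cycles of length at most four in G. -/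
open SimpleGraph

/-! Two disjoint short cycles need six vertices, so `T(K₄) ≤ 1`, and it suffices to show
`T(L) ≤ T(H)` for the other graph `L`. The graph `L` minus one vertex (`z` on the split side, `x`
on the edge side) survives unchanged in `H`, and the `K₄` side still contains a triangle of `H`
disjoint from it. So a packing of `L` loses at most the one cycle through that vertex, and the
triangle replaces it. -/

namespace ShortCycleSet

variable {α β : Type*} {G : SimpleGraph α} {G' : SimpleGraph β} {S : Set α}

theorem image (hS : ShortCycleSet G S) {f : α → β} (hinj : S.InjOn f)
    (hadj : ∀ a ∈ S, ∀ b ∈ S, G.Adj a b → G'.Adj (f a) (f b)) :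
    ShortCycleSet G' (f '' S) := by
  obtain ⟨v, w, hcyc, hlen, hwS⟩ := hS
  let φ : G.induce S →g G' := ⟨fun a => f a, fun {a b} h => hadj a a.2 b b.2 h⟩
  have hφ : Function.Injective φ := fun a b h => Subtype.ext (hinj a.2 b.2 h)
  let w' := w.induce S fun x hx => hwS ▸ hx
  have hw' : w'.map (Embedding.induce S).toHom = w := Walk.map_induce _ _
  have hcyc' : w'.IsCycle := by
    rwa [← Walk.isCycle_map_iff_of_injective (f := (Embedding.induce S).toHom)
      Subtype.val_injective, hw']
  refine ⟨f v, w'.map φ, hcyc'.map hφ, ?_, ?_⟩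
  · rwa [Walk.length_map, ← Walk.length_map (Embedding.induce S).toHom, hw']
  · calc {x | x ∈ (w'.map φ).support} = f '' {x | x ∈ w.support} := by
          ext b
          simp [w', φ, Walk.support_map, Walk.support_induce]
      _ = f '' S := by rw [hwS]

theorem of_triangle {a b c : α} (hab : G.Adj a b) (hbc : G.Adj b c) (hca : G.Adj c a) :
    ShortCycleSet G {a, b, c} := by
  refine ⟨a, .cons hab (.cons hbc (.cons hca .nil)), ?_, by simp, ?_⟩
  · simp [Walk.cons_isCycle_iff, hab.ne, hbc.ne, hca.ne, hab.ne', hca.ne']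
  · ext x
    simp only [Walk.support_cons, Walk.support_nil, List.mem_cons, List.not_mem_nil,
      Set.mem_ofPred_eq, Set.mem_insert_iff, Set.mem_singleton_iff]
    tauto

theorem three_le_ncard (hS : ShortCycleSet G S) : 3 ≤ S.ncard := by
  classical
  obtain ⟨v, w, hcyc, -, rfl⟩ := hS
  have htail : {x | x ∈ w.support} = ↑w.support.tail.toFinset := by
    ext x
    simp only [Set.mem_ofPred_eq, List.coe_toFinset, w.mem_support_iff, or_iff_right_iff_imp]
    rintro rfl
    exact w.end_mem_tail_support hcyc.not_nil
  rw [htail, Set.ncard_coe_finset, List.toFinset_card_of_nodup hcyc.support_nodup]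
  simpa using hcyc.three_le_length

theorem nonempty (hS : ShortCycleSet G S) : S.Nonempty :=
  Set.nonempty_of_ncard_ne_zero (by have := hS.three_le_ncard; omega)

end ShortCycleSet

open Classical in
theorem Finset.card_filter_not_disjoint_le {α : Type*} {C : Finset (Set α)}
    (hC : (C : Set (Set α)).Pairwise Disjoint) {t : Set α} (ht : t.Finite) :
    (C.filter fun S => ¬Disjoint S t).card ≤ t.ncard := by
  rw [Set.ncard_eq_toFinset_card t ht]
  refine Finset.card_le_card_of_forall_subsingleton (fun S a => a ∈ S) ?_ ?_
  · intro S hS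
    obtain ⟨a, haS, hat⟩ := Set.not_disjoint_iff.mp (Finset.mem_filter.mp hS).2
    exact ⟨a, ht.mem_toFinset.mpr hat, haS⟩
  · rintro a - S ⟨hS, haS⟩ S' ⟨hS', haS'⟩
    by_contra hne
    exact Set.disjoint_left.mp (hC (Finset.mem_filter.mp hS).1 (Finset.mem_filter.mp hS').1 hne)
      haS haS'

def IsShortCyclePacking {α : Type*} (G : SimpleGraph α) (C : Finset (Set α)) : Prop :=
  (∀ S ∈ C, ShortCycleSet G S) ∧ (C : Set (Set α)).Pairwise Disjoint

namespace IsShortCyclePacking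

variable {α β : Type*} {G : SimpleGraph α} {G' : SimpleGraph β} {C : Finset (Set α)}

theorem exists_image (hC : IsShortCyclePacking G C) {f : α → β} {t : Set α} (ht : t.Finite)
    (hinj : tᶜ.InjOn f) (hadj : ∀ a ∉ t, ∀ b ∉ t, G.Adj a b → G'.Adj (f a) (f b)) :
    ∃ D, IsShortCyclePacking G' D ∧ C.card ≤ D.card + t.ncard ∧ ∀ S ∈ D, S ⊆ f '' tᶜ := by
  classical
  set C₀ := C.filter fun S => Disjoint S t
  have hsub : ∀ S ∈ C₀, S ⊆ tᶜ := fun S hS => (Finset.mem_filter.mp hS).2.subset_compl_right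
  refine ⟨C₀.image (f '' ·), ⟨?_, ?_⟩, ?_, ?_⟩
  · simp only [Finset.mem_image]
    rintro _ ⟨S, hS, rfl⟩
    exact (hC.1 S (Finset.mem_filter.mp hS).1).image (hinj.mono (hsub S hS))
      fun a ha b hb => hadj a (hsub S hS ha) b (hsub S hS hb)
  · simp only [Finset.coe_image]
    rintro _ ⟨S, hS, rfl⟩ _ ⟨S', hS', rfl⟩ hne
    exact (hC.2 (Finset.mem_filter.mp hS).1 (Finset.mem_filter.mp hS').1
      fun h => hne (h ▸ rfl)).image hinj (hsub S hS) (hsub S' hS')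
  · rw [Finset.card_image_of_injOn fun S hS S' hS' => hinj.image (hsub S hS) (hsub S' hS'),
      ← Finset.card_filter_add_card_filter_not (fun S => Disjoint S t)]
    exact Nat.add_le_add_left (Finset.card_filter_not_disjoint_le hC.2 ht) _
  · simp only [Finset.mem_image]
    rintro _ ⟨S, hS, rfl⟩
    exact Set.image_mono (hsub S hS)

theorem exists_map (hC : IsShortCyclePacking G C) (f : G →g G') (hf : Function.Injective f) :
    ∃ D, IsShortCyclePacking G' D ∧ C.card ≤ D.card := by
  obtain ⟨D, hD, hCD, -⟩ := hC.exists_image Set.finite_empty hf.injOn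
    fun a _ b _ h => f.map_adj h
  exact ⟨D, hD, by simpa using hCD⟩

theorem exists_card_le_of_disjoint (hC : IsShortCyclePacking G C) {f : α → β} {a : α}
    (hinj : ({a}ᶜ : Set α).InjOn f) (hadj : ∀ u ≠ a, ∀ v ≠ a, G.Adj u v → G'.Adj (f u) (f v))
    {T : Set β} (hT : ShortCycleSet G' T) (hTf : Disjoint T (f '' {a}ᶜ)) :
    ∃ D, IsShortCyclePacking G' D ∧ C.card ≤ D.card := by
  classical
  obtain ⟨D, hD, hCD, hDf⟩ := hC.exists_image (Set.finite_singleton a) hinj (by simpa using hadj)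
  have hTD : ∀ S ∈ D, Disjoint T S := fun S hS => hTf.mono_right (hDf S hS)
  have hTnotD : T ∉ D := fun h => hT.nonempty.ne_empty (disjoint_self.mp (hTD T h))
  refine ⟨insert T D, ⟨?_, ?_⟩, ?_⟩
  · simpa [hT] using hD.1
  · rw [Finset.coe_insert]
    exact hD.2.insert fun S hS _ => ⟨hTD S hS, (hTD S hS).symm⟩
  · rw [Finset.card_insert_of_notMem hTnotD]
    simpa using hCD

theorem three_mul_card_le [Finite α] (hC : IsShortCyclePacking G C) :
    3 * C.card ≤ Nat.card α :=
  calc 3 * C.card ≤ ∑ S ∈ C, S.ncard := by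
        rw [mul_comm, ← smul_eq_mul]
        exact Finset.card_nsmul_le_sum C _ 3 fun S hS => (hC.1 S hS).three_le_ncard
    _ = (⋃ S ∈ (C : Set (Set α)), S).ncard := by
        rw [C.finite_toSet.ncard_biUnion (fun S _ => Set.toFinite S) hC.2, finsum_mem_coe_finset]
    _ ≤ Nat.card α := Set.ncard_le_card _

end IsShortCyclePacking

section maxTri

variable {α β : Type*} {G : SimpleGraph α} {G' : SimpleGraph β}

theorem maxTri_def (G : SimpleGraph α) :
    maxTri G = sSup {n | ∃ C : Finset (Set α), C.card = n ∧ IsShortCyclePacking G C} :=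
  rfl

theorem maxTri_le {k : ℕ} (h : ∀ C, IsShortCyclePacking G C → C.card ≤ k) : maxTri G ≤ k :=
  csSup_le' <| by
    rintro _ ⟨C, rfl, hC⟩
    exact h C hC

/-- The backward embedding is needed because `sSup` of an unbounded set of naturals is `0`: it
shows that `G` has unbounded packings when `G'` has. -/
theorem maxTri_le_maxTri
    (fwd : ∀ C, IsShortCyclePacking G C → ∃ D, IsShortCyclePacking G' D ∧ C.card ≤ D.card)
    {g : β → α} {t : Set β} (ht : t.Finite) (hinj : tᶜ.InjOn g)
    (hadj : ∀ a ∉ t, ∀ b ∉ t, G'.Adj a b → G.Adj (g a) (g b)) :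
    maxTri G ≤ maxTri G' := by
  rw [maxTri_def, maxTri_def]
  by_cases hbdd : BddAbove {n | ∃ D : Finset (Set β), D.card = n ∧ IsShortCyclePacking G' D}
  · refine csSup_le' ?_
    rintro _ ⟨C, rfl, hC⟩
    obtain ⟨D, hD, hCD⟩ := fwd C hC
    exact hCD.trans (le_csSup hbdd ⟨D, rfl, hD⟩)
  · have hunbdd : ¬BddAbove {n | ∃ C : Finset (Set α), C.card = n ∧ IsShortCyclePacking G C} := by
      rintro ⟨b, hb⟩
      refine hbdd ⟨b + t.ncard, ?_⟩
      rintro _ ⟨D, rfl, hD⟩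
      obtain ⟨C, hC, hDC, -⟩ := hD.exists_image ht hinj hadj
      have := hb ⟨C, rfl, hC⟩
      omega
    rw [csSup_of_not_bddAbove hunbdd, csSup_of_not_bddAbove hbdd]

theorem maxTri_eq_of_iso (e : G ≃g G') : maxTri G = maxTri G' :=
  le_antisymm
    (maxTri_le_maxTri (fun _ hC => hC.exists_map e.toHom e.injective) Set.finite_empty
      e.symm.injective.injOn fun _ _ _ _ h => e.symm.map_adj_iff.mpr h)
    (maxTri_le_maxTri (fun _ hD => hD.exists_map e.symm.toHom e.symm.injective)
      Set.finite_empty e.injective.injOn fun _ _ _ _ h => e.map_adj_iff.mpr h)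

theorem three_mul_maxTri_le [Finite α] (G : SimpleGraph α) : 3 * maxTri G ≤ Nat.card α := by
  have := maxTri_le (G := G) (k := Nat.card α / 3) fun C hC => by
    have := hC.three_mul_card_le
    omega
  omega

theorem maxTri_le_one_of_iso_top (e : G ≃g (⊤ : SimpleGraph (Fin 4))) : maxTri G ≤ 1 := by
  have := three_mul_maxTri_le (⊤ : SimpleGraph (Fin 4))
  rw [Nat.card_eq_fintype_card, Fintype.card_fin] at this
  rw [maxTri_eq_of_iso e]
  omega

theorem exists_shortCycleSet_notMem_of_iso_top (e : G ≃g (⊤ : SimpleGraph (Fin 4))) (v : α) :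
    ∃ S, ShortCycleSet G S ∧ v ∉ S := by
  obtain ⟨a, b, c, hab, hbc, hca, ha, hb, hc⟩ : ∃ a b c : Fin 4,
      a ≠ b ∧ b ≠ c ∧ c ≠ a ∧ a ≠ e v ∧ b ≠ e v ∧ c ≠ e v := by
    generalize e v = i
    revert i
    decide
  refine ⟨e.symm '' {a, b, c}, (ShortCycleSet.of_triangle (G := ⊤) hab hbc hca).image
    e.symm.injective.injOn fun _ _ _ _ h => e.symm.map_adj_iff.mpr h, ?_⟩
  rintro ⟨u, hu, huv⟩
  rw [e.symm_apply_eq] at huv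
  subst huv
  simp only [Set.mem_insert_iff, Set.mem_singleton_iff] at hu
  rcases hu with rfl | rfl | rfl <;> simp_all

end maxTri

section Ore

variable {V₁ V₂ : Type*} {G₁ : SimpleGraph V₁} {G₂ : SimpleGraph V₂} {x y : V₁} {z : V₂}
  {A : Set V₂}

theorem oreGraph_adj_inl_inl {a b : V₁} :
    (oreGraph G₁ x y G₂ z A).Adj (.inl a) (.inl b) ↔
      G₁.Adj a b ∧ ¬(a = x ∧ b = y) ∧ ¬(a = y ∧ b = x) := by
  rw [oreGraph, fromRel_adj]
  grind [G₁.adj_comm, SimpleGraph.Adj.ne]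

theorem oreGraph_adj_inr_inr {a b : {v : V₂ // v ≠ z}} :
    (oreGraph G₁ x y G₂ z A).Adj (.inr a) (.inr b) ↔ G₂.Adj a b := by
  rw [oreGraph, fromRel_adj]
  grind [G₂.adj_comm, SimpleGraph.Adj.ne]

open Classical in
/-- The inclusion of `G₂ - z` into the Ore composition; its value at `z` plays no role. -/
noncomputable def oreInr (x : V₁) (z : V₂) (v : V₂) : V₁ ⊕ {v : V₂ // v ≠ z} :=
  if h : v = z then .inl x else .inr ⟨v, h⟩

theorem oreInr_of_ne {v : V₂} (h : v ≠ z) : oreInr x z v = .inr ⟨v, h⟩ := dif_neg h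

theorem injOn_oreInr : ({z}ᶜ : Set V₂).InjOn (oreInr x z) := by
  intro a ha b hb hab
  rw [oreInr_of_ne ha, oreInr_of_ne hb] at hab
  simpa using congrArg Subtype.val (Sum.inr_injective hab)

theorem oreGraph_adj_oreInr {a b : V₂} (ha : a ≠ z) (hb : b ≠ z) (hab : G₂.Adj a b) :
    (oreGraph G₁ x y G₂ z A).Adj (oreInr x z a) (oreInr x z b) := by
  rw [oreInr_of_ne ha, oreInr_of_ne hb]
  exact oreGraph_adj_inr_inr.mpr hab

theorem maxTri_le_maxTri_oreGraph_left [Finite V₂] {T : Set V₂} (hT : ShortCycleSet G₂ T)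
    (hzT : z ∉ T) : maxTri G₁ ≤ maxTri (oreGraph G₁ x y G₂ z A) := by
  have hT' : ShortCycleSet (oreGraph G₁ x y G₂ z A) (oreInr x z '' T) :=
    hT.image (injOn_oreInr.mono fun v hv => ne_of_mem_of_not_mem hv hzT)
      fun a ha b hb => oreGraph_adj_oreInr (ne_of_mem_of_not_mem ha hzT)
        (ne_of_mem_of_not_mem hb hzT)
  refine maxTri_le_maxTri (g := Sum.elim id fun _ => x) ?_ (Set.finite_range Sum.inr) ?_ ?_
  · intro C hC
    refine hC.exists_card_le_of_disjoint (a := x) Sum.inl_injective.injOn ?_ hT' ?_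
    · intro u hu v hv huv
      exact oreGraph_adj_inl_inl.mpr ⟨huv, fun h => hu h.1, fun h => hv h.2⟩
    · rw [Set.disjoint_left]
      rintro _ ⟨a, ha, rfl⟩ ⟨b, -, hb⟩
      rw [oreInr_of_ne (ne_of_mem_of_not_mem ha hzT)] at hb
      exact Sum.inl_ne_inr hb
  · rintro (a | a) ha (b | b) hb h <;> simp_all
  · rintro (a | a) ha (b | b) hb h <;> simp_all [oreGraph_adj_inl_inl]

theorem maxTri_le_maxTri_oreGraph_right [Finite V₁] {T : Set V₁} (hT : ShortCycleSet G₁ T)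
    (hyT : y ∉ T) : maxTri G₂ ≤ maxTri (oreGraph G₁ x y G₂ z A) := by
  have hT' : ShortCycleSet (oreGraph G₁ x y G₂ z A) (Sum.inl '' T) :=
    hT.image Sum.inl_injective.injOn fun a ha b hb hab =>
      oreGraph_adj_inl_inl.mpr ⟨hab, fun h => hyT (h.2 ▸ hb), fun h => hyT (h.1 ▸ ha)⟩
  refine maxTri_le_maxTri (g := Sum.elim (fun _ => z) Subtype.val) ?_ (Set.finite_range Sum.inl)
    ?_ ?_
  · intro C hC
    refine hC.exists_card_le_of_disjoint (a := z) injOn_oreInr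
      (fun u hu v hv => oreGraph_adj_oreInr hu hv) hT' ?_
    rw [Set.disjoint_left]
    rintro _ ⟨a, -, rfl⟩ ⟨b, hb, hab⟩
    rw [oreInr_of_ne hb] at hab
    exact Sum.inr_ne_inl hab
  · rintro (a | a) ha (b | b) hb h <;> simp_all [Subtype.ext_iff]
  · rintro (a | a) ha (b | b) hb h <;> simp_all [oreGraph_adj_inr_inr]

end Ore

/-- If `H` is an Ore composition of `H₁` and `H₂` and one of `H₁`, `H₂` is isomorphic to
`K₄`, then `T(H) ≥ T(H₁) + T(H₂) - 1`. -/
theorem ore_composition_K4_T_ge {V₁ V₂ V₃ : Type*} (H : SimpleGraph V₃)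
    (H₁ : SimpleGraph V₁) (H₂ : SimpleGraph V₂) (h : IsOreComposition H H₁ H₂)
    (hK4 : Nonempty (H₁ ≃g (⊤ : SimpleGraph (Fin 4))) ∨
      Nonempty (H₂ ≃g (⊤ : SimpleGraph (Fin 4)))) :
    maxTri H₁ + maxTri H₂ ≤ maxTri H + 1 := by
  obtain ⟨x, y, z, A, -, -, -, ⟨eH⟩⟩ := h
  rw [maxTri_eq_of_iso eH]
  rcases hK4 with ⟨⟨e⟩⟩ | ⟨⟨e⟩⟩
  · have : Finite V₁ := .of_equiv _ e.toEquiv.symm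
    obtain ⟨T, hT, hyT⟩ := exists_shortCycleSet_notMem_of_iso_top e y
    have := maxTri_le_maxTri_oreGraph_right (x := x) (G₂ := H₂) (z := z) (A := A) hT hyT
    have := maxTri_le_one_of_iso_top e
    omega
  · have : Finite V₂ := .of_equiv _ e.toEquiv.symm
    obtain ⟨T, hT, hzT⟩ := exists_shortCycleSet_notMem_of_iso_top e z
    have := maxTri_le_maxTri_oreGraph_left (G₁ := H₁) (x := x) (y := y) (A := A) hT hzT
    have := maxTri_le_one_of_iso_top e
    omega
end

section
/- If a graph G has no two adjacent vertices both of degree at least 4 and the set of degree-three vertices induces a bipartite subgraph, then G is 3-colorable. -/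
open SimpleGraph

namespace SimpleGraph

variable {V : Type*} {G : SimpleGraph V} {s : Set V} {n : ℕ}

theorem Colorable.succ_of_induce (hs : ∀ u v, G.Adj u v → u ∈ s ∨ v ∈ s)
    (h : (G.induce s).Colorable n) : G.Colorable (n + 1) := by
  classical
  obtain ⟨C⟩ := h
  refine ⟨⟨fun v => if hv : v ∈ s then (C ⟨v, hv⟩).castSucc else Fin.last n, ?_⟩⟩
  intro u v huv
  by_cases hu : u ∈ s <;> by_cases hv : v ∈ s
  · simpa [hu, hv] using C.valid (show (G.induce s).Adj ⟨u, hu⟩ ⟨v, hv⟩ from huv)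
  · simp [hu, hv, (Fin.castSucc_lt_last (C ⟨u, hu⟩)).ne]
  · simp [hu, hv, (Fin.castSucc_lt_last (C ⟨v, hv⟩)).ne']
  · exact ((hs u v huv).elim hu hv).elim

end SimpleGraph

theorem three_colorable_of_deg3_bipartite_general {V : Type*} [Fintype V]
    (G : SimpleGraph V) [DecidableRel G.Adj]
    (h1 : ∀ u v : V, G.Adj u v → G.degree u = 3 ∨ G.degree v = 3)
    (h2 : (G.induce {v : V | G.degree v = 3}).Colorable 2) :
    G.Colorable 3 :=
  h2.succ_of_induce h1

/-- If every edge of a finite graph `G` has at least one endpoint of degree exactly three,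
and the subgraph induced by the degree-three vertices is bipartite, then `G` is
3-colorable. -/
theorem three_colorable_of_deg3_bipartite {V : Type*} [Fintype V] [DecidableEq V]
    (G : SimpleGraph V) [DecidableRel G.Adj]
    (h1 : ∀ u v : V, G.Adj u v → G.degree u = 3 ∨ G.degree v = 3)
    (h2 : (G.induce {v : V | G.degree v = 3}).Colorable 2) :
    G.Colorable 3 :=
  three_colorable_of_deg3_bipartite_general G h1 h2
end
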